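/- For every duplicative forest f, the poset D*(f) (ordered by ≪) is a lattice: any two elements of D*(f) have a greatest lower bound and a least upper bound within D*(f). -/

import Mathlib

/-- Mockingbird terms: the constant `M`, variables `x i`, and applications. -/
inductive MTerm : Type
  | M : MTerm
  | var : ℕ → MTerm
  | app : MTerm → MTerm → MTerm
  deriving DecidableEq

/-- The one-step rewrite relation `⇒` on Mockingbird terms. -/
inductive Step : MTerm → MTerm → Prop
  | mock (t : MTerm) : Step (MTerm.app MTerm.M t) (MTerm.app t t)
  | left {t1 t1' : MTerm} (t2 : MTerm) :
      Step t1 t1' → Step (MTerm.app t1 t2) (MTerm.app t1' t2)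
  | right (t1 : MTerm) {t2 t2' : MTerm} :
      Step t2 t2' → Step (MTerm.app t1 t2) (MTerm.app t1 t2')

/-- `≼`, the reflexive-transitive closure of `⇒`. -/
def MLe : MTerm → MTerm → Prop := Relation.ReflTransGen Step

/-- `≡`, the reflexive-symmetric-transitive closure of `⇒`. -/
def MEquiv : MTerm → MTerm → Prop := Relation.EqvGen Step

/-- Strict version of `≼`. -/
def MLt (s t : MTerm) : Prop := MLe s t ∧ s ≠ t

/-- Covering relation for `≼`. -/
def MCovBy (s t : MTerm) : Prop := MLt s t ∧ ∀ z, MLt s z → ¬ MLt z t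

/-- Duplicative trees: white or black nodes with a list (forest) of children. -/
inductive DTree : Type
  | W : List DTree → DTree
  | B : List DTree → DTree

/-- The one-step relation `⋖` on duplicative forests. -/
inductive DStep : List DTree → List DTree → Prop
  | dup (g : List DTree) : DStep [DTree.W g] [DTree.B (g ++ g)]
  | white {g g' : List DTree} : DStep g g' → DStep [DTree.W g] [DTree.W g']
  | black {g g' : List DTree} : DStep g g' → DStep [DTree.B g] [DTree.B g']
  | head {t t' : DTree} (f : List DTree) : DStep [t] [t'] → DStep (t :: f) (t' :: f)
  | tail (t : DTree) {f f' : List DTree} : DStep f f' → DStep (t :: f) (t :: f')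

/-- `≪`, the reflexive-transitive closure of `⋖`. -/
def DLe : List DTree → List DTree → Prop := Relation.ReflTransGen DStep

/-- The map `fr` from Mockingbird terms to duplicative forests. -/
def fr : MTerm → List DTree
  | MTerm.M => []
  | MTerm.var _ => []
  | MTerm.app MTerm.M MTerm.M => [DTree.B []]
  | MTerm.app MTerm.M t' => [DTree.W (fr t')]
  | MTerm.app t t' => [DTree.B (fr t ++ fr t')]

mutual
  /-- The pruning map on duplicative trees (returns a forest). -/
  def prT : DTree → List DTree
    | DTree.W g => [DTree.W (prF g)]
    | DTree.B g => prF g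
  /-- The pruning map on duplicative forests. -/
  def prF : List DTree → List DTree
    | [] => []
    | t :: f => prT t ++ prF f
end

mutual
  /-- The statistic `mtStat` on duplicative trees. -/
  def mtStat : DTree → ℕ
    | DTree.W g => 2 * ml g
    | DTree.B g => ml g
  /-- Sum of `mtStat` over the trees of a forest. -/
  def mtsum : List DTree → ℕ
    | [] => 0
    | t :: f => mtStat t + mtsum f
  /-- The statistic `ml` on duplicative forests: `1 - ℓ + Σ mtStat`. -/
  def ml : List DTree → ℕ
    | f => mtsum f + 1 - f.length
end

mutual
  /-- Number of white nodes in a duplicative tree. -/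
  def whitesT : DTree → ℕ
    | DTree.W g => 1 + whitesF g
    | DTree.B g => whitesF g
  /-- Number of white nodes in a duplicative forest. -/
  def whitesF : List DTree → ℕ
    | [] => 0
    | t :: f => whitesT t + whitesF f
end

/-- Closed terms: no variables. -/
def MClosed : MTerm → Prop
  | MTerm.M => True
  | MTerm.var _ => False
  | MTerm.app a b => MClosed a ∧ MClosed b

/-- Degree: number of applications. -/
def deg : MTerm → ℕ
  | MTerm.M => 0
  | MTerm.var _ => 0
  | MTerm.app a b => deg a + deg b + 1

/-- Subterm relation. -/
inductive Subterm : MTerm → MTerm → Prop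
  | refl (t : MTerm) : Subterm t t
  | left {s a : MTerm} (b : MTerm) : Subterm s a → Subterm s (MTerm.app a b)
  | right (a : MTerm) {s b : MTerm} : Subterm s b → Subterm s (MTerm.app a b)

/-- The term `r_d`. -/
def rTerm : ℕ → MTerm
  | 0 => MTerm.M
  | d + 1 => MTerm.app MTerm.M (rTerm d)

/-- Saturated chain from `a` to `b`, given as the list of its elements. -/
def SatChain (a b : MTerm) (c : List MTerm) : Prop :=
  List.Chain' MCovBy c ∧ c.head? = some a ∧ c.getLast? = some b


namespace DupAux

open Relation DTree

lemma dle_refl (f : List DTree) : DLe f f := Relation.ReflTransGen.refl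

lemma dle_trans {a b c : List DTree} (h1 : DLe a b) (h2 : DLe b c) : DLe a c :=
  Relation.ReflTransGen.trans h1 h2

lemma dstep_nil {y : List DTree} (h : DStep [] y) : False := by cases h

lemma dstep_cons {t : DTree} {f y : List DTree} (h : DStep (t :: f) y) :
    (∃ t', y = t' :: f ∧ DStep [t] [t']) ∨ (∃ f', y = t :: f' ∧ DStep f f') := by
  cases h with
  | dup g => exact Or.inl ⟨_, rfl, DStep.dup g⟩
  | white h => exact Or.inl ⟨_, rfl, DStep.white h⟩
  | black h => exact Or.inl ⟨_, rfl, DStep.black h⟩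
  | head f h => exact Or.inl ⟨_, rfl, h⟩
  | tail t h => exact Or.inr ⟨_, rfl, h⟩

lemma dstep_length {f f' : List DTree} (h : DStep f f') : f.length = f'.length := by
  induction h <;> simp_all

lemma dle_length {f f' : List DTree} (h : DLe f f') : f.length = f'.length := by
  induction h with
  | refl => rfl
  | tail _ s ih => exact ih.trans (dstep_length s)

lemma dstep_append_right {f f' : List DTree} (h : DStep f f') (g : List DTree) :
    DStep (f ++ g) (f' ++ g) := by
  induction h with
  | dup g0 => exact DStep.head _ (DStep.dup g0)
  | white h => exact DStep.head _ (DStep.white h)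
  | black h => exact DStep.head _ (DStep.black h)
  | head f h ih => exact DStep.head _ h
  | tail t h ih => exact DStep.tail t ih

lemma dstep_append_left (g : List DTree) {f f' : List DTree} (h : DStep f f') :
    DStep (g ++ f) (g ++ f') := by
  induction g with
  | nil => exact h
  | cons t g ih => exact DStep.tail t ih

lemma dle_append {a a' b b' : List DTree} (h1 : DLe a a') (h2 : DLe b b') :
    DLe (a ++ b) (a' ++ b') := by
  have s1 : DLe (a ++ b) (a' ++ b) :=
    Relation.ReflTransGen.lift (· ++ b) (fun _ _ h => dstep_append_right h b) _ _ h1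
  have s2 : DLe (a' ++ b) (a' ++ b') :=
    Relation.ReflTransGen.lift (a' ++ ·) (fun _ _ h => dstep_append_left a' h) _ _ h2
  exact dle_trans s1 s2

lemma dle_white_lift {g g' : List DTree} (h : DLe g g') : DLe [DTree.W g] [DTree.W g'] :=
  Relation.ReflTransGen.lift (fun x => [DTree.W x]) (fun _ _ h => DStep.white h) _ _ h

lemma dle_black_lift {g g' : List DTree} (h : DLe g g') : DLe [DTree.B g] [DTree.B g'] :=
  Relation.ReflTransGen.lift (fun x => [DTree.B x]) (fun _ _ h => DStep.black h) _ _ h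

lemma dle_wb_lift {g h : List DTree} (hh : DLe (g ++ g) h) : DLe [DTree.W g] [DTree.B h] :=
  Relation.ReflTransGen.head (DStep.dup g) (dle_black_lift hh)

lemma dstep_black_aux : ∀ {l y : List DTree}, DStep l y → ∀ g, l = [DTree.B g] →
    ∃ g', y = [DTree.B g'] ∧ DStep g g' := by
  intro l y h
  induction h with
  | dup g => intro g0 hg; simp at hg
  | white h ih => intro g0 hg; simp at hg
  | black h =>
      intro g0 hg
      simp only [List.cons.injEq, DTree.B.injEq, and_true] at hg
      subst hg
      exact ⟨_, rfl, h⟩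
  | head f h ih =>
      intro g0 hg
      simp only [List.cons.injEq] at hg
      obtain ⟨rfl, rfl⟩ := hg
      obtain ⟨g', hy, hs⟩ := ih g0 rfl
      exact ⟨g', by rw [hy], hs⟩
  | tail t h ih =>
      intro g0 hg
      simp only [List.cons.injEq] at hg
      obtain ⟨rfl, rfl⟩ := hg
      exact absurd h dstep_nil


lemma dstep_white_aux : ∀ {l y : List DTree}, DStep l y → ∀ g, l = [DTree.W g] →
    y = [DTree.B (g ++ g)] ∨ ∃ g', y = [DTree.W g'] ∧ DStep g g' := by
  intro l y h
  induction h with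
  | dup g =>
      intro g0 hg
      simp only [List.cons.injEq, DTree.W.injEq, and_true] at hg
      subst hg
      exact Or.inl rfl
  | white h =>
      intro g0 hg
      simp only [List.cons.injEq, DTree.W.injEq, and_true] at hg
      subst hg
      exact Or.inr ⟨_, rfl, h⟩
  | black h => intro g0 hg; simp at hg
  | head f h ih =>
      intro g0 hg
      simp only [List.cons.injEq] at hg
      obtain ⟨rfl, rfl⟩ := hg
      rcases ih g0 rfl with h1 | ⟨g', hy, hs⟩
      · exact Or.inl (by rw [h1])
      · exact Or.inr ⟨g', by rw [hy], hs⟩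
  | tail t h ih =>
      intro g0 hg
      simp only [List.cons.injEq] at hg
      obtain ⟨rfl, rfl⟩ := hg
      exact absurd h dstep_nil

lemma dle_nil {y : List DTree} (h : DLe [] y) : y = [] := by
  induction h with
  | refl => rfl
  | tail _ s ih => subst ih; exact absurd s dstep_nil

lemma dle_black {g y : List DTree} (h : DLe [DTree.B g] y) :
    ∃ g', y = [DTree.B g'] ∧ DLe g g' := by
  induction h with
  | refl => exact ⟨g, rfl, dle_refl g⟩
  | tail _ s ih =>
      obtain ⟨g', rfl, hg⟩ := ih
      obtain ⟨g'', rfl, hs⟩ := dstep_black_aux s g' rfl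
      exact ⟨g'', rfl, hg.tail hs⟩

lemma dle_white {g y : List DTree} (h : DLe [DTree.W g] y) :
    (∃ g', y = [DTree.W g'] ∧ DLe g g') ∨ (∃ h', y = [DTree.B h'] ∧ DLe (g ++ g) h') := by
  induction h with
  | refl => exact Or.inl ⟨g, rfl, dle_refl g⟩
  | tail _ s ih =>
      rcases ih with ⟨g', rfl, hg⟩ | ⟨h', rfl, hh⟩
      · rcases dstep_white_aux s g' rfl with h1 | ⟨g'', rfl, hs⟩
        · exact Or.inr ⟨g' ++ g', h1, dle_append hg hg⟩
        · exact Or.inl ⟨g'', rfl, hg.tail hs⟩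
      · obtain ⟨h'', rfl, hs⟩ := dstep_black_aux s h' rfl
        exact Or.inr ⟨h'', rfl, hh.tail hs⟩

lemma dle_bb {g g' : List DTree} : DLe [DTree.B g] [DTree.B g'] ↔ DLe g g' := by
  constructor
  · intro h
    obtain ⟨g'', he, hg⟩ := dle_black h
    simp only [List.cons.injEq, DTree.B.injEq, and_true] at he
    exact he ▸ hg
  · exact dle_black_lift

lemma dle_ww {g g' : List DTree} : DLe [DTree.W g] [DTree.W g'] ↔ DLe g g' := by
  constructor
  · intro h
    rcases dle_white h with ⟨g'', he, hg⟩ | ⟨h', he, _⟩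
    · simp only [List.cons.injEq, DTree.W.injEq, and_true] at he
      exact he ▸ hg
    · simp at he
  · exact dle_white_lift

lemma dle_wb {g h : List DTree} : DLe [DTree.W g] [DTree.B h] ↔ DLe (g ++ g) h := by
  constructor
  · intro hle
    rcases dle_white hle with ⟨g'', he, _⟩ | ⟨h', he, hh⟩
    · simp at he
    · simp only [List.cons.injEq, DTree.B.injEq, and_true] at he
      exact he ▸ hh
  · exact dle_wb_lift

lemma not_dle_bw {g g' : List DTree} (h : DLe [DTree.B g] [DTree.W g']) : False := by
  obtain ⟨g'', he, _⟩ := dle_black h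
  simp at he

lemma dstep_split {a b y : List DTree} (h : DStep (a ++ b) y) :
    (∃ a', y = a' ++ b ∧ DStep a a') ∨ (∃ b', y = a ++ b' ∧ DStep b b') := by
  induction a generalizing y with
  | nil => exact Or.inr ⟨y, rfl, h⟩
  | cons t a ih =>
      rcases dstep_cons h with ⟨t', rfl, hs⟩ | ⟨f', rfl, hf⟩
      · exact Or.inl ⟨t' :: a, rfl, DStep.head a hs⟩
      · rcases ih hf with ⟨a', rfl, ha⟩ | ⟨b', rfl, hb⟩
        · exact Or.inl ⟨t :: a', rfl, DStep.tail t ha⟩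
        · exact Or.inr ⟨b', rfl, hb⟩

lemma dle_split {a b y : List DTree} (h : DLe (a ++ b) y) :
    ∃ a' b', y = a' ++ b' ∧ a.length = a'.length ∧ DLe a a' ∧ DLe b b' := by
  induction h with
  | refl => exact ⟨a, b, rfl, rfl, dle_refl a, dle_refl b⟩
  | tail _ s ih =>
      obtain ⟨a', b', rfl, hl, ha, hb⟩ := ih
      rcases dstep_split s with ⟨a'', rfl, hs⟩ | ⟨b'', rfl, hs⟩
      · exact ⟨a'', b', rfl, hl.trans (dstep_length hs), ha.tail hs, hb⟩
      · exact ⟨a', b'', rfl, hl, ha, hb.tail hs⟩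

lemma dle_split_eq {a1 a2 b1 b2 : List DTree} (h : DLe (a1 ++ a2) (b1 ++ b2))
    (hl : a1.length = b1.length) : DLe a1 b1 ∧ DLe a2 b2 := by
  obtain ⟨y1, y2, hy, l, h1, h2⟩ := dle_split h
  obtain ⟨rfl, rfl⟩ := List.append_inj hy.symm (l.symm.trans hl)
  exact ⟨h1, h2⟩


/-- Meet-and-join statement for two elements of `D*(f)`. -/
def MJ (f a b : List DTree) : Prop :=
  (∃ g, DLe f g ∧ DLe g a ∧ DLe g b ∧
    ∀ z, DLe f z → DLe z a → DLe z b → DLe z g) ∧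
  (∃ j, DLe f j ∧ DLe a j ∧ DLe b j ∧
    ∀ z, DLe f z → DLe a z → DLe b z → DLe j z)

lemma mj_symm {f a b : List DTree} (h : MJ f a b) : MJ f b a := by
  obtain ⟨⟨m, h1, h2, h3, h4⟩, ⟨j, k1, k2, k3, k4⟩⟩ := h
  exact ⟨⟨m, h1, h3, h2, fun z hz za zb => h4 z hz zb za⟩,
    ⟨j, k1, k3, k2, fun z hz za zb => k4 z hz zb za⟩⟩

def Lat (f : List DTree) : Prop := ∀ a b, DLe f a → DLe f b → MJ f a b

lemma lat_nil : Lat [] := by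
  intro a b ha hb
  obtain rfl := dle_nil ha
  obtain rfl := dle_nil hb
  refine ⟨⟨[], dle_refl _, dle_refl _, dle_refl _, ?_⟩,
          ⟨[], dle_refl _, dle_refl _, dle_refl _, ?_⟩⟩ <;>
    (intro z hz _ _; obtain rfl := dle_nil hz; exact dle_refl _)

lemma lat_append {f1 f2 : List DTree} (h1 : Lat f1) (h2 : Lat f2) : Lat (f1 ++ f2) := by
  intro a b ha hb
  obtain ⟨a1, a2, rfl, la, ha1, ha2⟩ := dle_split ha
  obtain ⟨b1, b2, rfl, lb, hb1, hb2⟩ := dle_split hb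
  obtain ⟨⟨g1, hg1f, hg1a, hg1b, hg1u⟩, ⟨j1, hj1f, hj1a, hj1b, hj1u⟩⟩ := h1 a1 b1 ha1 hb1
  obtain ⟨⟨g2, hg2f, hg2a, hg2b, hg2u⟩, ⟨j2, hj2f, hj2a, hj2b, hj2u⟩⟩ := h2 a2 b2 ha2 hb2
  constructor
  · refine ⟨g1 ++ g2, dle_append hg1f hg2f, dle_append hg1a hg2a, dle_append hg1b hg2b, ?_⟩
    intro z hfz hza hzb
    obtain ⟨z1, z2, rfl, lz, hz1, hz2⟩ := dle_split hfz
    obtain ⟨za1, za2⟩ := dle_split_eq hza (lz.symm.trans la)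
    obtain ⟨zb1, zb2⟩ := dle_split_eq hzb (lz.symm.trans lb)
    exact dle_append (hg1u z1 hz1 za1 zb1) (hg2u z2 hz2 za2 zb2)
  · refine ⟨j1 ++ j2, dle_append hj1f hj2f, dle_append hj1a hj2a, dle_append hj1b hj2b, ?_⟩
    intro z hfz hza hzb
    obtain ⟨z1, z2, rfl, lz, hz1, hz2⟩ := dle_split hfz
    obtain ⟨za1, za2⟩ := dle_split_eq hza (la.symm.trans lz)
    obtain ⟨zb1, zb2⟩ := dle_split_eq hzb (lb.symm.trans lz)
    exact dle_append (hj1u z1 hz1 za1 zb1) (hj2u z2 hz2 za2 zb2)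

lemma lat_black {g : List DTree} (hg : Lat g) : Lat [DTree.B g] := by
  intro a b ha hb
  obtain ⟨a', rfl, ha'⟩ := dle_black ha
  obtain ⟨b', rfl, hb'⟩ := dle_black hb
  obtain ⟨⟨m, hmf, hma, hmb, hmu⟩, ⟨j, hjf, hja, hjb, hju⟩⟩ := hg a' b' ha' hb'
  constructor
  · refine ⟨[DTree.B m], dle_bb.2 hmf, dle_bb.2 hma, dle_bb.2 hmb, ?_⟩
    intro z hz hza hzb
    obtain ⟨c, rfl, hc⟩ := dle_black hz
    exact dle_bb.2 (hmu c hc (dle_bb.1 hza) (dle_bb.1 hzb))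
  · refine ⟨[DTree.B j], dle_bb.2 hjf, dle_bb.2 hja, dle_bb.2 hjb, ?_⟩
    intro z hz hza hzb
    obtain ⟨c, rfl, hc⟩ := dle_black hz
    exact dle_bb.2 (hju c hc (dle_bb.1 hza) (dle_bb.1 hzb))

lemma lat_white_ww {g a' b' : List DTree} (hg : Lat g) (ha' : DLe g a') (hb' : DLe g b') :
    MJ [DTree.W g] [DTree.W a'] [DTree.W b'] := by
  obtain ⟨⟨m, hmf, hma, hmb, hmu⟩, ⟨j, hjf, hja, hjb, hju⟩⟩ := hg a' b' ha' hb'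
  constructor
  · refine ⟨[DTree.W m], dle_ww.2 hmf, dle_ww.2 hma, dle_ww.2 hmb, ?_⟩
    intro z hz hza hzb
    rcases dle_white hz with ⟨c, rfl, hc⟩ | ⟨k, rfl, hk⟩
    · exact dle_ww.2 (hmu c hc (dle_ww.1 hza) (dle_ww.1 hzb))
    · exact absurd hza not_dle_bw
  · refine ⟨[DTree.W j], dle_ww.2 hjf, dle_ww.2 hja, dle_ww.2 hjb, ?_⟩
    intro z hz hza hzb
    rcases dle_white hz with ⟨c, rfl, hc⟩ | ⟨k, rfl, hk⟩
    · exact dle_ww.2 (hju c hc (dle_ww.1 hza) (dle_ww.1 hzb))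
    · have hak : DLe (a' ++ a') k := dle_wb.1 hza
      have hbk : DLe (b' ++ b') k := dle_wb.1 hzb
      obtain ⟨k1, k2, rfl, lk, hk1, hk2⟩ := dle_split hak
      have lab : b'.length = a'.length := (dle_length hb').symm.trans (dle_length ha')
      obtain ⟨hbk1, hbk2⟩ := dle_split_eq hbk (lab.trans lk)
      exact dle_wb.2 (dle_append (hju k1 (ha'.trans hk1) hk1 hbk1)
        (hju k2 (ha'.trans hk2) hk2 hbk2))

lemma lat_white_wb {g a' h : List DTree} (hg : Lat g) (ha' : DLe g a') (hh : DLe (g ++ g) h) :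
    MJ [DTree.W g] [DTree.W a'] [DTree.B h] := by
  obtain ⟨h1, h2, rfl, lh, hh1, hh2⟩ := dle_split hh
  have la : g.length = a'.length := dle_length ha'
  obtain ⟨⟨m1, hm1f, hm1a, hm1h1, hm1u⟩, ⟨j1, hj1f, hj1a, hj1h1, hj1u⟩⟩ := hg a' h1 ha' hh1
  obtain ⟨⟨m, hmf, hmm1, hmh2, hmu⟩, -⟩ := hg m1 h2 hm1f hh2
  obtain ⟨-, ⟨j2, hj2f, hj2a, hj2h2, hj2u⟩⟩ := hg a' h2 ha' hh2
  constructor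
  · refine ⟨[DTree.W m], dle_ww.2 hmf, dle_ww.2 (hmm1.trans hm1a),
      dle_wb.2 (dle_append (hmm1.trans hm1h1) hmh2), ?_⟩
    intro z hz hza hzb
    rcases dle_white hz with ⟨c, rfl, hc⟩ | ⟨k, rfl, hk⟩
    · have hca : DLe c a' := dle_ww.1 hza
      have hch : DLe (c ++ c) (h1 ++ h2) := dle_wb.1 hzb
      obtain ⟨hch1, hch2⟩ := dle_split_eq hch ((dle_length hc).symm.trans lh)
      exact dle_ww.2 (hmu c hc (hm1u c hc hca hch1) hch2)
    · exact absurd hza not_dle_bw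
  · refine ⟨[DTree.B (j1 ++ j2)], dle_wb.2 (dle_append hj1f hj2f),
      dle_wb.2 (dle_append hj1a hj2a), dle_bb.2 (dle_append hj1h1 hj2h2), ?_⟩
    intro z hz hza hzb
    obtain ⟨k, rfl, hk⟩ := dle_black hzb
    have hak : DLe (a' ++ a') k := dle_wb.1 hza
    obtain ⟨k1, k2, rfl, lk, hk1, hk2⟩ := dle_split hk
    obtain ⟨hak1, hak2⟩ := dle_split_eq hak ((la.symm.trans lh).trans lk)
    exact dle_bb.2 (dle_append (hj1u k1 (hh1.trans hk1) hak1 hk1)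
      (hj2u k2 (hh2.trans hk2) hak2 hk2))

lemma lat_white_bb {g h h' : List DTree} (hgg : Lat (g ++ g))
    (hh : DLe (g ++ g) h) (hh' : DLe (g ++ g) h') :
    MJ [DTree.W g] [DTree.B h] [DTree.B h'] := by
  obtain ⟨⟨m, hmf, hma, hmb, hmu⟩, ⟨j, hjf, hja, hjb, hju⟩⟩ := hgg h h' hh hh'
  constructor
  · refine ⟨[DTree.B m], dle_wb.2 hmf, dle_bb.2 hma, dle_bb.2 hmb, ?_⟩
    intro z hz hza hzb
    rcases dle_white hz with ⟨c, rfl, hc⟩ | ⟨k, rfl, hk⟩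
    · exact dle_wb.2 (hmu (c ++ c) (dle_append hc hc) (dle_wb.1 hza) (dle_wb.1 hzb))
    · exact dle_bb.2 (hmu k hk (dle_bb.1 hza) (dle_bb.1 hzb))
  · refine ⟨[DTree.B j], dle_wb.2 hjf, dle_bb.2 hja, dle_bb.2 hjb, ?_⟩
    intro z hz hza hzb
    obtain ⟨k, rfl, hk⟩ := dle_black hza
    exact dle_bb.2 (hju k (hh.trans hk) hk (dle_bb.1 hzb))

lemma lat_white {g : List DTree} (hg : Lat g) (hgg : Lat (g ++ g)) : Lat [DTree.W g] := by
  intro a b ha hb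
  rcases dle_white ha with ⟨a', rfl, ha'⟩ | ⟨h, rfl, hh⟩ <;>
    rcases dle_white hb with ⟨b', rfl, hb'⟩ | ⟨h', rfl, hh'⟩
  · exact lat_white_ww hg ha' hb'
  · exact lat_white_wb hg ha' hh'
  · exact mj_symm (lat_white_wb hg hb' hh)
  · exact lat_white_bb hgg hh hh'

lemma dtree_size_pos (t : DTree) : 1 ≤ sizeOf t := by cases t <;> simp

lemma lat_all : ∀ f, Lat f := by
  have key : ∀ n f, sizeOf f ≤ n → Lat f := by
    intro n
    induction n with
    | zero => intro f hf; cases f <;> simp at hf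
    | succ n ih =>
        intro f hf
        match f with
        | [] => exact lat_nil
        | [DTree.W g] =>
            have hs : sizeOf g ≤ n := by simp at hf; omega
            exact lat_white (ih g hs) (lat_append (ih g hs) (ih g hs))
        | [DTree.B g] =>
            have hs : sizeOf g ≤ n := by simp at hf; omega
            exact lat_black (ih g hs)
        | t :: t' :: f' =>
            have h1 : sizeOf t' ≥ 1 := dtree_size_pos t'
            have h2 : sizeOf f' ≥ 1 := by cases f' <;> simp <;> omega
            have hs1 : sizeOf [t] ≤ n := by simp at hf ⊢; omega
            have hs2 : sizeOf (t' :: f') ≤ n := by simp at hf ⊢; omega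
            have := lat_append (ih [t] hs1) (ih (t' :: f') hs2)
            simpa using this
  intro f; exact key (sizeOf f) f le_rfl

end DupAux

/-- for every duplicative forest `f`, the poset `D*(f)` (ordered by `≪`) is a
lattice: any two of its elements have a greatest lower bound and a least upper bound within
`D*(f)`. -/
theorem duplicative_poset_lattice (f : List DTree) :
    ∀ a b, DLe f a → DLe f b →
      (∃ g, DLe f g ∧ DLe g a ∧ DLe g b ∧
        ∀ z, DLe f z → DLe z a → DLe z b → DLe z g) ∧
      (∃ j, DLe f j ∧ DLe a j ∧ DLe b j ∧
        ∀ z, DLe f z → DLe a z → DLe b z → DLe j z) :=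
  DupAux.lat_all f
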